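/- For angles φ₁, φ₂ ∈ [-φₘ, φₘ] with 0 < φₘ ≤ π/18, the minimum of A = cos(δ)cos(φ₁)cos(φ₂) + sin(φ₁)sin(φ₂) over φ₁, φ₂ is attained at φ₁ = -φ₂ with |φ₁| = φₘ, and equals cos(δ) - (1+cos(δ))·sin²(φₘ). -/

import Mathlib

/-!
By the product-to-sum formulas,
`c cos φ₁ cos φ₂ + sin φ₁ sin φ₂ = (1 + c)/2 · cos (φ₁ - φ₂) - (1 - c)/2 · cos (φ₁ + φ₂)`,
and for `c = cos δ` both coefficients are nonnegative. Since `|φ₁ - φ₂| ≤ 2 φₘ ≤ π`, the first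
cosine is at least `cos (2 φₘ) = 1 - 2 sin² φₘ`, and the second is at most `1`; both bounds are
attained at `φ₁ = -φ₂ = ±φₘ`.
-/

open Real

namespace Real

lemma cos_le_cos_of_abs_le {x y : ℝ} (hxy : |x| ≤ y) (hy : y ≤ π) : cos y ≤ cos x := by
  rw [← cos_abs x]
  exact cos_le_cos_of_nonneg_of_le_pi (abs_nonneg x) hy hxy

lemma sin_sq_eq_of_abs_eq {x y : ℝ} (h : |x| = y) : sin x ^ 2 = sin y ^ 2 := by
  rw [sin_sq, sin_sq, ← h, cos_abs]

end Real

lemma mul_cos_mul_cos_add_sin_mul_sin (c a b : ℝ) :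
    c * cos a * cos b + sin a * sin b
      = (1 + c) / 2 * cos (a - b) - (1 - c) / 2 * cos (a + b) := by
  rw [cos_sub, cos_add]
  ring

lemma mul_cos_neg_mul_cos_add_sin_neg_mul_sin (c b : ℝ) :
    c * cos (-b) * cos b + sin (-b) * sin b = c - (1 + c) * sin b ^ 2 := by
  rw [cos_neg, sin_neg]
  linear_combination c * sin_sq_add_cos_sq b

lemma le_mul_cos_mul_cos_add_sin_mul_sin {c m a b : ℝ} (hc : |c| ≤ 1) (hm : 2 * m ≤ π)
    (ha : |a| ≤ m) (hb : |b| ≤ m) :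
    c - (1 + c) * sin m ^ 2 ≤ c * cos a * cos b + sin a * sin b := by
  obtain ⟨hc₁, hc₂⟩ := abs_le.mp hc
  have hdiff : 1 - 2 * sin m ^ 2 ≤ cos (a - b) := by
    rw [← cos_two_mul_eq_one_sub]
    exact cos_le_cos_of_abs_le ((abs_sub a b).trans (by linarith)) hm
  have hsum : cos (a + b) ≤ 1 := cos_le_one _
  rw [mul_cos_mul_cos_add_sin_mul_sin]
  linarith [mul_le_mul_of_nonneg_left hdiff (by linarith : 0 ≤ 1 + c),
    mul_le_mul_of_nonneg_left hsum (by linarith : 0 ≤ 1 - c)]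

theorem length_constraint_min_attainment_general
    (φm δ : ℝ) (hφm' : φm ≤ π / 18) :
    (∀ φ1 ∈ Set.Icc (-φm) φm, ∀ φ2 ∈ Set.Icc (-φm) φm,
      cos δ * cos φ1 * cos φ2 + sin φ1 * sin φ2 ≥ cos δ - (1 + cos δ) * (sin φm) ^ 2) ∧
    (∀ φ1 φ2 : ℝ, φ1 = -φ2 → |φ1| = φm →
      cos δ * cos φ1 * cos φ2 + sin φ1 * sin φ2 = cos δ - (1 + cos δ) * (sin φm) ^ 2) := by
  refine ⟨fun φ1 h1 φ2 h2 => ?_, fun φ1 φ2 hφ habs => ?_⟩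
  · exact le_mul_cos_mul_cos_add_sin_mul_sin (abs_cos_le_one δ) (by linarith [pi_pos])
      (abs_le.mpr h1) (abs_le.mpr h2)
  · subst hφ
    rw [abs_neg] at habs
    rw [mul_cos_neg_mul_cos_add_sin_neg_mul_sin, sin_sq_eq_of_abs_eq habs]

theorem length_constraint_min_attainment
    (φm δ : ℝ) (hφm : 0 < φm) (hφm' : φm ≤ π / 18) :
    (∀ φ1 ∈ Set.Icc (-φm) φm, ∀ φ2 ∈ Set.Icc (-φm) φm,
      cos δ * cos φ1 * cos φ2 + sin φ1 * sin φ2 ≥ cos δ - (1 + cos δ) * (sin φm) ^ 2) ∧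
    (∀ φ1 φ2 : ℝ, φ1 = -φ2 → |φ1| = φm →
      cos δ * cos φ1 * cos φ2 + sin φ1 * sin φ2 = cos δ - (1 + cos δ) * (sin φm) ^ 2) :=
  length_constraint_min_attainment_general φm δ hφm'
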